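/- arXiv:0906.2714 — 4 statements merged into one kernel-verified Lean document; each statement's English description precedes it below -/
import Mathlib

section
/- Let u, v : [0,T] → ℝ be measurable, M > 0, ε > 0, and suppose |v(t)| ≤ M for all t ∈ [0,T]. Let J_ε = {t ∈ [0,T] : |u(t)| ≤ εM} with Lebesgue measure μ_ε(T). Then ∫₀ᵀ |χ_ε(u(t),v(t))| dt ≤ M·μ_ε(T), where χ_ε(u,v) = ((u+εv)_+ − u_+ − ε·H(u)v)/ε. -/
open MeasureTheory

lemma chi_abs_le (M ε a b : ℝ) (hε : 0 < ε) (hb : |b| ≤ M) :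
    |(max (a + ε * b) 0 - max a 0 - ε * (if 0 < a then b else 0)) / ε| ≤ M := by
  rw [abs_div, abs_of_pos hε, div_le_iff₀ hε]
  obtain ⟨hb1, hb2⟩ := abs_le.mp hb
  rcases lt_or_ge 0 a with ha | ha <;> rcases le_or_gt 0 (a + ε * b) with hab | hab
  · rw [if_pos ha, max_eq_left hab, max_eq_left ha.le, abs_le]
    constructor <;> nlinarith
  · rw [if_pos ha, max_eq_right hab.le, max_eq_left ha.le, abs_le]
    constructor <;> nlinarith
  · rw [if_neg (not_lt.mpr ha), max_eq_left hab, max_eq_right ha, abs_le]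
    constructor <;> nlinarith
  · rw [if_neg (not_lt.mpr ha), max_eq_right hab.le, max_eq_right ha, abs_le]
    constructor <;> nlinarith

lemma chi_zero (M ε a b : ℝ) (hM : 0 < M) (hε : 0 < ε) (hb : |b| ≤ M)
    (ha : ε * M < |a|) :
    (max (a + ε * b) 0 - max a 0 - ε * (if 0 < a then b else 0)) / ε = 0 := by
  obtain ⟨hb1, hb2⟩ := abs_le.mp hb
  rcases lt_abs.mp ha with ha' | ha'
  · have ha0 : 0 < a := lt_trans (by positivity) ha'
    have hab : 0 ≤ a + ε * b := by nlinarith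
    rw [if_pos ha0, max_eq_left hab, max_eq_left ha0.le]
    ring
  · have ha0 : a < 0 := by nlinarith
    have hab : a + ε * b < 0 := by nlinarith
    rw [if_neg (not_lt.mpr ha0.le), max_eq_right hab.le, max_eq_right ha0.le]
    ring

/-- The integral of |χ_ε(u(t),v(t))| over [0,T] is bounded by M times the
measure of the set where |u(t)| ≤ εM. -/
theorem chi_integral_bound (T M ε : ℝ) (hT : 0 ≤ T) (hM : 0 < M) (hε : 0 < ε)
    (u v : ℝ → ℝ) (hu : Measurable u) (hv : Measurable v)
    (hvM : ∀ t ∈ Set.Icc 0 T, |v t| ≤ M) :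
    ∫ t in Set.Icc (0:ℝ) T,
        |(max (u t + ε * v t) 0 - max (u t) 0 -
            ε * (if 0 < u t then v t else 0)) / ε| ≤
      M * (volume {t ∈ Set.Icc (0:ℝ) T | |u t| ≤ ε * M}).toReal := by
  set f : ℝ → ℝ := fun t =>
    |(max (u t + ε * v t) 0 - max (u t) 0 - ε * (if 0 < u t then v t else 0)) / ε|
    with hf
  have hAeq : {t ∈ Set.Icc (0:ℝ) T | |u t| ≤ ε * M}
      = Set.Icc (0:ℝ) T ∩ {t | |u t| ≤ ε * M} := rfl
  set A := {t ∈ Set.Icc (0:ℝ) T | |u t| ≤ ε * M} with hA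
  have hAm : MeasurableSet A := by
    rw [hAeq]
    exact measurableSet_Icc.inter (measurableSet_le hu.abs measurable_const)
  have hfm : Measurable f := by
    apply Measurable.abs
    apply Measurable.div_const
    exact (((hu.add (measurable_const.mul hv)).max measurable_const).sub
      (hu.max measurable_const)).sub (measurable_const.mul
        (Measurable.ite (measurableSet_lt measurable_const hu) hv measurable_const))
  have hbound : ∀ t ∈ Set.Icc (0:ℝ) T, f t ≤ M := fun t ht =>
    chi_abs_le M ε (u t) (v t) hε (hvM t ht)
  have hzero : ∀ t ∈ Set.Icc (0:ℝ) T, ¬ |u t| ≤ ε * M → f t = 0 := by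
    intro t ht h
    simp only [hf]
    rw [chi_zero M ε (u t) (v t) hM hε (hvM t ht) (not_le.mp h), abs_zero]
  have hfin : volume (Set.Icc (0:ℝ) T) ≠ ⊤ := (measure_Icc_lt_top).ne
  have hint : IntegrableOn f (Set.Icc 0 T) := by
    apply Integrable.mono' (integrable_const M)
      (hfm.aestronglyMeasurable)
    filter_upwards [ae_restrict_mem measurableSet_Icc] with t ht
    rw [Real.norm_eq_abs, abs_abs]
    exact hbound t ht
  have hintg : IntegrableOn (A.indicator fun _ => M) (Set.Icc 0 T) := by
    apply Integrable.mono' (integrable_const M)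
      ((measurable_const.indicator hAm).aestronglyMeasurable)
    filter_upwards with t
    rw [Real.norm_eq_abs, Set.indicator]
    split <;> simp [abs_of_pos hM, hM.le]
  have hle : ∫ t in Set.Icc (0:ℝ) T, f t
      ≤ ∫ t in Set.Icc (0:ℝ) T, A.indicator (fun _ => M) t := by
    apply setIntegral_mono_on hint hintg measurableSet_Icc
    intro t ht
    by_cases h : |u t| ≤ ε * M
    · have htA : t ∈ A := ⟨ht, h⟩
      rw [Set.indicator_of_mem htA]
      exact hbound t ht
    · have htA : t ∉ A := fun hm => h hm.2
      rw [Set.indicator_of_notMem htA, hzero t ht h]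
  calc ∫ t in Set.Icc (0:ℝ) T, f t
      ≤ ∫ t in Set.Icc (0:ℝ) T, A.indicator (fun _ => M) t := hle
    _ = ∫ _ in Set.Icc (0:ℝ) T ∩ A, M := setIntegral_indicator hAm
    _ = ∫ _ in A, M := by
        congr 1
        rw [hAeq, ← Set.inter_assoc, Set.inter_self]
    _ = (volume A).toReal • M := setIntegral_const M
    _ = M * (volume A).toReal := by rw [smul_eq_mul, mul_comm]
end

section
/- Consider the piecewise-linear oscillator ü + ω₀²u + ε·u_+ = 0 with ω₀ > 0 and ε > 0. Every nontrivial solution is periodic with period P(ε) = (π/ω₀)·(1 + (1 + ε/ω₀²)^{−1/2}), independent of the amplitude; equivalently the angular frequency is ω(ε) = 2π/P(ε) = 2ω₀/(1 + (1 + ε/ω₀²)^{−1/2}). -/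
/-!
Writing the equation as `ẍ = -g x` with `g x = ω₀² x + ε x₊`, the force is linear on each
half-line: `g x = ω₁² x` for `x ≥ 0`, where `ω₁ = √(ω₀² + ε)`, and `g x = ω₀² x` for `x ≤ 0`.
A solution that never vanishes would be a harmonic oscillation, which changes sign after
half a period; so it has a zero. From a zero, the motion is an explicit half sine arc of duration
`π / ω₁` in `x ≥ 0` or `π / ω₀` in `x ≤ 0`, ending at the zero state with reversed velocity.
Two such arcs bring the phase point back after `π / ω₁ + π / ω₀`, and uniqueness of solutions of
the (Lipschitz) autonomous system makes the motion periodic with that period.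
-/

open Real Set
open scoped NNReal

noncomputable section

def newtonField (g : ℝ → ℝ) (p : ℝ × ℝ) : ℝ × ℝ := (p.2, -g p.1)

def harmonicFlow (Ω : ℝ) (p : ℝ × ℝ) (t : ℝ) : ℝ × ℝ :=
  (p.1 * cos (Ω * t) + p.2 / Ω * sin (Ω * t), -(p.1 * Ω) * sin (Ω * t) + p.2 * cos (Ω * t))

end

lemma LipschitzWith.newtonField {K : ℝ≥0} {g : ℝ → ℝ} (hg : LipschitzWith K g) :
    LipschitzWith (max 1 K) (newtonField g) := by
  have h := (LipschitzWith.prod_snd (α := ℝ) (β := ℝ)).prodMk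
    (hg.comp LipschitzWith.prod_fst).neg
  rwa [mul_one] at h

lemma newtonField_congr {g g' : ℝ → ℝ} {p : ℝ × ℝ} (h : g p.1 = g' p.1) :
    newtonField g p = newtonField g' p := by
  simp [newtonField, h]

section HarmonicFlow

variable {Ω : ℝ}

@[simp]
lemma harmonicFlow_zero (p : ℝ × ℝ) : harmonicFlow Ω p 0 = p := by
  simp [harmonicFlow]

lemma harmonicFlow_pi_div (hΩ : Ω ≠ 0) (p : ℝ × ℝ) : harmonicFlow Ω p (π / Ω) = -p := by
  ext <;> simp [harmonicFlow, mul_div_cancel₀ π hΩ]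

lemma fst_harmonicFlow_zero_fst (c t : ℝ) :
    (harmonicFlow Ω (0, c) t).1 = c * (sin (Ω * t) / Ω) := by
  simp only [harmonicFlow]
  ring

lemma hasDerivAt_harmonicFlow (hΩ : Ω ≠ 0) (p : ℝ × ℝ) (t : ℝ) :
    HasDerivAt (harmonicFlow Ω p) (newtonField (Ω ^ 2 * ·) (harmonicFlow Ω p t)) t := by
  have hlin : HasDerivAt (Ω * ·) Ω t := by simpa using (hasDerivAt_id t).const_mul Ω
  have hcos := (hasDerivAt_cos (Ω * t)).comp t hlin
  have hsin := (hasDerivAt_sin (Ω * t)).comp t hlin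
  convert ((hcos.const_mul p.1).add (hsin.const_mul (p.2 / Ω))).prodMk
    ((hsin.const_mul (-(p.1 * Ω))).add (hcos.const_mul p.2)) using 1
  · funext t
    simp [harmonicFlow]
  · simp only [newtonField, harmonicFlow, Prod.mk.injEq]
    constructor
    · field_simp
    · field_simp
      ring

lemma sin_mul_div_nonneg (hΩ : 0 < Ω) {s : ℝ} (hs : s ∈ Ico 0 (π / Ω)) :
    0 ≤ sin (Ω * s) / Ω :=
  div_nonneg (sin_nonneg_of_nonneg_of_le_pi (mul_nonneg hΩ.le hs.1)
    ((lt_div_iff₀' hΩ).1 hs.2).le) hΩ.le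

end HarmonicFlow

theorem ODE_solution_periodic_of_apply_add_eq {E : Type*} [NormedAddCommGroup E]
    [NormedSpace ℝ E] {K : ℝ≥0} {v : E → E} (hv : LipschitzWith K v) {F : ℝ → E}
    (hF : ∀ t, HasDerivAt F (v (F t)) t) {t₀ T : ℝ} (hT : F (t₀ + T) = F t₀) :
    Function.Periodic F T := by
  have hshift : ∀ t, HasDerivAt (fun s => F (s + T)) (v (F (t + T))) t :=
    fun t => (hF (t + T)).comp_add_const t T
  have := ODE_solution_unique_univ (v := fun _ => v) (s := fun _ => univ) (t₀ := t₀)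
    (fun _ => hv.lipschitzOnWith) (fun t => ⟨hshift t, trivial⟩) (fun t => ⟨hF t, trivial⟩) hT
  exact congrFun this

lemma pos_of_forall_ne_zero {f : ℝ → ℝ} (hf : Continuous f) (hne : ∀ t, f t ≠ 0) {a : ℝ}
    (ha : 0 < f a) (b : ℝ) : 0 < f b := by
  by_contra! hb
  obtain ⟨t, -, ht⟩ := intermediate_value_uIcc hf.continuousOn (mem_uIcc.2 (Or.inr ⟨hb, ha.le⟩))
  exact hne t ht

section NewtonField

variable {g : ℝ → ℝ} {F : ℝ → ℝ × ℝ} {Ω : ℝ}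

/-- As long as the harmonic motion started from `F t₀` stays where `g` is linear with slope `Ω²`,
it is also a motion under `g`, so it coincides with `F` for half a period. -/
theorem apply_add_pi_div_eq_neg_of_harmonic_arc {K : ℝ≥0} (hΩ : 0 < Ω) (hg : LipschitzWith K g)
    (hF : ∀ t, HasDerivAt F (newtonField g (F t)) t) {t₀ : ℝ}
    (harc : ∀ s ∈ Ico 0 (π / Ω),
      g (harmonicFlow Ω (F t₀) s).1 = Ω ^ 2 * (harmonicFlow Ω (F t₀) s).1) :
    F (t₀ + π / Ω) = -F t₀ := by
  set G : ℝ → ℝ × ℝ := fun t => harmonicFlow Ω (F t₀) (t - t₀)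
  have hG : ∀ t, HasDerivAt G (newtonField (Ω ^ 2 * ·) (G t)) t := fun t => by
    simpa using (hasDerivAt_harmonicFlow hΩ.ne' (F t₀) (t - t₀)).comp_sub_const t t₀
  have hFG : EqOn F G (Icc t₀ (t₀ + π / Ω)) := by
    refine ODE_solution_unique (v := fun _ => newtonField g) (fun _ => hg.newtonField)
      (HasDerivAt.continuousOn fun t _ => hF t) (fun t _ => (hF t).hasDerivWithinAt)
      (HasDerivAt.continuousOn fun t _ => hG t) (fun t ht => ?_) (by simp [G])
    have hs : t - t₀ ∈ Ico 0 (π / Ω) := ⟨sub_nonneg.2 ht.1, by linarith [ht.2]⟩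
    rw [newtonField_congr (harc _ hs)]
    exact (hG t).hasDerivWithinAt
  have hend := hFG (right_mem_Icc.2 (by linarith [div_pos pi_pos hΩ]))
  simpa [G, harmonicFlow_pi_div hΩ.ne'] using hend

theorem apply_add_pi_div_eq_neg_of_forall (hΩ : 0 < Ω)
    (hF : ∀ t, HasDerivAt F (newtonField g (F t)) t) (hg : ∀ t, g (F t).1 = Ω ^ 2 * (F t).1)
    (t₀ : ℝ) : F (t₀ + π / Ω) = -F t₀ := by
  have hF' : ∀ t, HasDerivAt F (newtonField (Ω ^ 2 * ·) (F t)) t := fun t => by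
    simpa only [newtonField_congr (hg t)] using hF t
  exact apply_add_pi_div_eq_neg_of_harmonic_arc hΩ (lipschitzWith_smul (Ω ^ 2)) hF'
    fun _ _ => rfl

theorem apply_add_pi_div_of_eq_zero_fst {K : ℝ≥0} (hΩ : 0 < Ω) (hg : LipschitzWith K g)
    (hF : ∀ t, HasDerivAt F (newtonField g (F t)) t) {t₀ c : ℝ} (h₀ : F t₀ = (0, c))
    (harc : ∀ s ∈ Ico 0 (π / Ω),
      g (c * (sin (Ω * s) / Ω)) = Ω ^ 2 * (c * (sin (Ω * s) / Ω))) :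
    F (t₀ + π / Ω) = (0, -c) := by
  rw [apply_add_pi_div_eq_neg_of_harmonic_arc hΩ hg hF, h₀]
  · simp
  · simpa only [h₀, fst_harmonicFlow_zero_fst] using harc

variable {Ω₁ Ω₀ : ℝ} (hΩ₁ : 0 < Ω₁) (hΩ₀ : 0 < Ω₀)
  (hg_nonneg : ∀ x, 0 ≤ x → g x = Ω₁ ^ 2 * x) (hg_nonpos : ∀ x, x ≤ 0 → g x = Ω₀ ^ 2 * x)
include hΩ₁ hΩ₀ hg_nonneg hg_nonpos

theorem exists_fst_eq_zero (hF : ∀ t, HasDerivAt F (newtonField g (F t)) t) :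
    ∃ t, (F t).1 = 0 := by
  by_contra! hne
  have hcont : Continuous fun t => (F t).1 :=
    continuous_fst.comp (continuous_iff_continuousAt.2 fun t => (hF t).continuousAt)
  rcases (hne 0).lt_or_gt with hneg | hpos
  · have hneg' : ∀ t, (F t).1 < 0 := fun t => neg_pos.1 <|
      pos_of_forall_ne_zero hcont.neg (fun t => neg_ne_zero.2 (hne t)) (neg_pos.2 hneg) t
    have := congrArg Prod.fst <|
      apply_add_pi_div_eq_neg_of_forall hΩ₀ hF (fun t => hg_nonpos _ (hneg' t).le) 0
    simp only [zero_add, Prod.fst_neg] at this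
    linarith [hneg' (π / Ω₀)]
  · have hpos' := pos_of_forall_ne_zero hcont hne hpos
    have := congrArg Prod.fst <|
      apply_add_pi_div_eq_neg_of_forall hΩ₁ hF (fun t => hg_nonneg _ (hpos' t).le) 0
    simp only [zero_add, Prod.fst_neg] at this
    linarith [hpos' (π / Ω₁)]

theorem apply_add_pi_div_add_pi_div_eq {K : ℝ≥0} (hg : LipschitzWith K g)
    (hF : ∀ t, HasDerivAt F (newtonField g (F t)) t) {t₀ : ℝ} (h₀ : (F t₀).1 = 0) :
    F (t₀ + (π / Ω₁ + π / Ω₀)) = F t₀ := by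
  have arc_nonneg : ∀ t c, 0 ≤ c → F t = (0, c) → F (t + π / Ω₁) = (0, -c) := fun t c hc ht =>
    apply_add_pi_div_of_eq_zero_fst hΩ₁ hg hF ht fun s hs =>
      hg_nonneg _ (mul_nonneg hc (sin_mul_div_nonneg hΩ₁ hs))
  have arc_nonpos : ∀ t c, c ≤ 0 → F t = (0, c) → F (t + π / Ω₀) = (0, -c) := fun t c hc ht =>
    apply_add_pi_div_of_eq_zero_fst hΩ₀ hg hF ht fun s hs =>
      hg_nonpos _ (mul_nonpos_of_nonpos_of_nonneg hc (sin_mul_div_nonneg hΩ₀ hs))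
  set c := (F t₀).2
  have hstart : F t₀ = (0, c) := Prod.ext h₀ rfl
  rcases le_total 0 c with hc | hc
  · rw [← add_assoc, arc_nonpos _ _ (neg_nonpos.2 hc) (arc_nonneg t₀ c hc hstart), neg_neg, hstart]
  · rw [add_comm (π / Ω₁), ← add_assoc,
      arc_nonneg _ _ (neg_nonneg.2 hc) (arc_nonpos t₀ c hc hstart), neg_neg, hstart]

end NewtonField

lemma pi_div_mul_one_add_one_div_sqrt {ω₀ ε : ℝ} (hω : 0 < ω₀) (hε : 0 ≤ ε) :
    (π / ω₀) * (1 + 1 / √(1 + ε / ω₀ ^ 2)) = π / √(ω₀ ^ 2 + ε) + π / ω₀ := by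
  have hsqrt : √(1 + ε / ω₀ ^ 2) = √(ω₀ ^ 2 + ε) / ω₀ := by
    rw [← sqrt_sq hω.le, ← sqrt_div (by positivity), sqrt_sq hω.le]
    congr 1
    field_simp
  have : 0 < √(ω₀ ^ 2 + ε) := by positivity
  rw [hsqrt]
  field_simp
  ring

theorem piecewise_oscillator_periodic_general (ω₀ ε : ℝ) (hω : 0 < ω₀) (hε : 0 < ε)
    (u u' : ℝ → ℝ)
    (hu : ∀ t, HasDerivAt u (u' t) t)
    (hu' : ∀ t, HasDerivAt u' (-(ω₀ ^ 2 * u t + ε * max (u t) 0)) t) :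
    Function.Periodic u ((π / ω₀) * (1 + 1 / Real.sqrt (1 + ε / ω₀ ^ 2))) := by
  set g : ℝ → ℝ := fun x => ω₀ ^ 2 * x + ε * max x 0
  set ω₁ := √(ω₀ ^ 2 + ε)
  have hω₁ : 0 < ω₁ := by positivity
  have hg : LipschitzWith _ g :=
    (lipschitzWith_smul (ω₀ ^ 2)).add ((lipschitzWith_smul ε).comp (LipschitzWith.id.max_const 0))
  have hg_nonneg : ∀ x, 0 ≤ x → g x = ω₁ ^ 2 * x := fun x hx => by
    simp only [g, ω₁]
    rw [sq_sqrt (by positivity), max_eq_left hx]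
    ring
  have hg_nonpos : ∀ x, x ≤ 0 → g x = ω₀ ^ 2 * x := fun x hx => by simp [g, max_eq_right hx]
  have hF : ∀ t, HasDerivAt (fun t => (u t, u' t)) (newtonField g (u t, u' t)) t :=
    fun t => (hu t).prodMk (hu' t)
  obtain ⟨t₀, ht₀⟩ := exists_fst_eq_zero hω₁ hω hg_nonneg hg_nonpos hF
  have hret := apply_add_pi_div_add_pi_div_eq hω₁ hω hg_nonneg hg_nonpos hg hF ht₀
  rw [pi_div_mul_one_add_one_div_sqrt hω hε.le]
  exact fun t => congrArg Prod.fst (ODE_solution_periodic_of_apply_add_eq hg.newtonField hF hret t)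

/-- Every nontrivial solution of ü + ω₀²u + ε·u_+ = 0 is periodic with period
P(ε) = (π/ω₀)·(1 + (1 + ε/ω₀²)^{-1/2}). -/
theorem piecewise_oscillator_periodic (ω₀ ε : ℝ) (hω : 0 < ω₀) (hε : 0 < ε)
    (u u' : ℝ → ℝ)
    (hu : ∀ t, HasDerivAt u (u' t) t)
    (hu' : ∀ t, HasDerivAt u' (-(ω₀ ^ 2 * u t + ε * max (u t) 0)) t)
    (hnz : (u 0, u' 0) ≠ (0, 0)) :
    Function.Periodic u ((π / ω₀) * (1 + 1 / Real.sqrt (1 + ε / ω₀ ^ 2))) :=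
  piecewise_oscillator_periodic_general ω₀ ε hω hε u u' hu hu'
end

section
/- Let λ₁, …, λ_N be positive reals that are ℤ-independent (no nontrivial integer linear combination vanishes), and let u(t) = Σ_{k=1}^N (a_k e^{iλ_k t} + ā_k e^{−iλ_k t}) be a real-valued trigonometric polynomial whose spectrum is contained in {±λ₁,…,±λ_N} with 0 ∉ Sp[u]. Then for each k, the mean value lim_{T→∞} (1/T)∫₀^T |u(t)|·e^{−iλ_k t} dt equals 0, i.e. λ_k is not in the spectrum of |u|. -/
/-!
Since `u` is real, `|u| = √(u²)`, and by Weierstrass `√` is uniformly approximated by polynomials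
on the bounded range of `u²`; hence `|u|` is a uniform limit of polynomials `p(u²)`. Every
frequency of `u` has the form `∑ mⱼ λⱼ` with `∑ mⱼ` odd, so every frequency of `p(u²)` has
`∑ mⱼ` even. By `ℤ`-independence `λₖ` is not of this form, so the `λₖ`-th Fourier coefficient of
each `p(u²)` vanishes, and by uniform approximation so does that of `|u|`.
-/

open Filter Complex

open scoped Pointwise Topology

noncomputable def runningMean (f : ℝ → ℂ) (T : ℝ) : ℂ :=
  (1 / T : ℂ) * ∫ t in (0:ℝ)..T, f t

theorem norm_runningMean_le {f : ℝ → ℂ} {C T : ℝ} (hT : 0 < T) (hf : ∀ t, ‖f t‖ ≤ C) :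
    ‖runningMean f T‖ ≤ C := by
  have h := intervalIntegral.norm_integral_le_of_norm_le_const (a := 0) (b := T)
    (fun t _ => hf t)
  rw [sub_zero, abs_of_pos hT] at h
  rw [runningMean, norm_mul, norm_div, norm_one, norm_real, Real.norm_of_nonneg hT.le]
  calc 1 / T * ‖∫ t in (0:ℝ)..T, f t‖ ≤ 1 / T * (C * T) := by gcongr
    _ = C := by field_simp

/-- In the notation `c_λ[v]` for Fourier coefficients, `HasVanishingMean (v * expFreq (-λ))`
says that `c_λ[v] = 0`. -/
def HasVanishingMean (f : ℝ → ℂ) : Prop :=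
  Tendsto (runningMean f) atTop (𝓝 0)

namespace HasVanishingMean

variable {f g : ℝ → ℂ}

theorem zero : HasVanishingMean 0 := by
  have h : runningMean 0 = 0 := funext fun T => by simp [runningMean]
  rw [HasVanishingMean, h]
  exact tendsto_const_nhds

theorem add (hf : HasVanishingMean f) (hg : HasVanishingMean g) (hfc : Continuous f)
    (hgc : Continuous g) : HasVanishingMean (f + g) := by
  have h := Tendsto.add hf hg
  rw [add_zero] at h
  refine h.congr fun T => ?_
  rw [runningMean, runningMean, runningMean, Pi.add_def,
    intervalIntegral.integral_add (hfc.intervalIntegrable _ _) (hgc.intervalIntegrable _ _),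
    mul_add]

theorem const_smul (c : ℂ) (hf : HasVanishingMean f) : HasVanishingMean (c • f) := by
  have h := hf.const_mul c
  rw [mul_zero] at h
  refine h.congr fun T => ?_
  simp only [runningMean, Pi.smul_apply, smul_eq_mul, intervalIntegral.integral_const_mul]
  ring

theorem of_forall_approx (hfc : Continuous f)
    (h : ∀ ε > 0, ∃ g, HasVanishingMean g ∧ Continuous g ∧ ∀ t, ‖f t - g t‖ ≤ ε) :
    HasVanishingMean f := by
  rw [HasVanishingMean, NormedAddGroup.tendsto_nhds_zero]
  intro ε hε
  obtain ⟨g, hg, hgc, hfg⟩ := h (ε / 2) (by positivity)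
  filter_upwards [NormedAddGroup.tendsto_nhds_zero.mp hg (ε / 2) (by positivity),
    eventually_gt_atTop 0] with T hgT hT
  have hsplit : runningMean f T = runningMean (f - g) T + runningMean g T := by
    simp only [runningMean, Pi.sub_apply]
    rw [intervalIntegral.integral_sub (hfc.intervalIntegrable _ _) (hgc.intervalIntegrable _ _)]
    ring
  calc _ ≤ _ := hsplit ▸ norm_add_le _ _
    _ < ε / 2 + ε / 2 := add_lt_add_of_le_of_lt (norm_runningMean_le hT hfg) hgT
    _ = ε := add_halves ε

end HasVanishingMean

noncomputable def expFreq (μ t : ℝ) : ℂ := exp (I * μ * t)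

@[fun_prop]
theorem continuous_expFreq (μ : ℝ) : Continuous (expFreq μ) := by
  unfold expFreq; fun_prop

theorem norm_expFreq (μ t : ℝ) : ‖expFreq μ t‖ = 1 := by
  rw [expFreq, mul_assoc, ← ofReal_mul, norm_exp_I_mul_ofReal]

theorem expFreq_add (μ ν : ℝ) : expFreq (μ + ν) = expFreq μ * expFreq ν := by
  ext t
  simp only [expFreq, Pi.mul_apply, ← exp_add, ofReal_add]
  ring_nf

theorem expFreq_zero : expFreq 0 = 1 := by
  ext t
  simp [expFreq]

theorem hasVanishingMean_expFreq {μ : ℝ} (hμ : μ ≠ 0) : HasVanishingMean (expFreq μ) := by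
  have hIμ : I * μ ≠ 0 := mul_ne_zero I_ne_zero (ofReal_ne_zero.mpr hμ)
  have hint (T : ℝ) : ∫ t in (0:ℝ)..T, expFreq μ t = (expFreq μ T - 1) / (I * μ) := by
    simpa [expFreq] using integral_exp_mul_complex (a := 0) (b := T) hIμ
  have hbound (T : ℝ) : ‖∫ t in (0:ℝ)..T, expFreq μ t‖ ≤ 2 / |μ| := by
    rw [hint, norm_div, norm_mul, norm_I, one_mul, norm_real, Real.norm_eq_abs]
    gcongr
    calc _ ≤ ‖expFreq μ T‖ + ‖(1 : ℂ)‖ := norm_sub_le _ _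
      _ = 2 := by rw [norm_expFreq, norm_one]; norm_num
  apply squeeze_zero_norm' (a := fun T => 1 / T * (2 / |μ|))
  · filter_upwards [eventually_gt_atTop 0] with T hT
    rw [runningMean, norm_mul, norm_div, norm_one, norm_real, Real.norm_of_nonneg hT.le]
    gcongr
    exact hbound T
  · simpa using tendsto_inv_atTop_zero.mul_const (2 / |μ|)

def trigPolySpan (F : Set ℝ) : Submodule ℂ (ℝ → ℂ) :=
  Submodule.span ℂ (expFreq '' F)

section TrigPoly

variable {F G : Set ℝ} {v w : ℝ → ℂ}

theorem trigPolySpan_mono (h : F ⊆ G) : trigPolySpan F ≤ trigPolySpan G :=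
  Submodule.span_mono (Set.image_mono h)

theorem expFreq_mem_trigPolySpan {μ : ℝ} (hμ : μ ∈ F) : expFreq μ ∈ trigPolySpan F :=
  Submodule.subset_span ⟨μ, hμ, rfl⟩

theorem continuous_of_mem_trigPolySpan (hv : v ∈ trigPolySpan F) : Continuous v := by
  induction hv using Submodule.span_induction with
  | mem _ h => obtain ⟨μ, -, rfl⟩ := h; exact continuous_expFreq μ
  | zero => exact continuous_const
  | add _ _ _ _ hv hw => exact hv.add hw
  | smul c _ _ hv => exact hv.const_smul c

theorem exists_norm_le_of_mem_trigPolySpan (hv : v ∈ trigPolySpan F) :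
    ∃ M, ∀ t, ‖v t‖ ≤ M := by
  induction hv using Submodule.span_induction with
  | mem _ h => obtain ⟨μ, -, rfl⟩ := h; exact ⟨1, fun t => (norm_expFreq μ t).le⟩
  | zero => exact ⟨0, fun t => by simp⟩
  | add _ _ _ _ hv hw =>
    obtain ⟨M, hM⟩ := hv
    obtain ⟨M', hM'⟩ := hw
    exact ⟨M + M', fun t => (norm_add_le _ _).trans (add_le_add (hM t) (hM' t))⟩
  | smul c _ _ hv =>
    obtain ⟨M, hM⟩ := hv
    exact ⟨‖c‖ * M, fun t => by rw [Pi.smul_apply, norm_smul]; gcongr; exact hM t⟩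

theorem mul_mem_trigPolySpan (hv : v ∈ trigPolySpan F) (hw : w ∈ trigPolySpan G) :
    v * w ∈ trigPolySpan (F + G) := by
  have hmul : expFreq '' F * expFreq '' G ⊆ expFreq '' (F + G) := by
    rintro _ ⟨_, ⟨μ, hμ, rfl⟩, _, ⟨ν, hν, rfl⟩, rfl⟩
    exact ⟨μ + ν, Set.add_mem_add hμ hν, expFreq_add μ ν⟩
  have hvw : v * w ∈ Submodule.span ℂ (expFreq '' F * expFreq '' G) :=
    Submodule.span_mul_span ℂ (expFreq '' F) (expFreq '' G) ▸ Submodule.mul_mem_mul hv hw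
  exact Submodule.span_mono hmul hvw

theorem hasVanishingMean_of_mem_trigPolySpan (hv : v ∈ trigPolySpan F) (hF : 0 ∉ F) :
    HasVanishingMean v := by
  induction hv using Submodule.span_induction with
  | mem _ h =>
    obtain ⟨μ, hμ, rfl⟩ := h
    exact hasVanishingMean_expFreq fun h => hF (h ▸ hμ)
  | zero => exact HasVanishingMean.zero
  | add _ _ hv hw hv0 hw0 =>
    exact hv0.add hw0 (continuous_of_mem_trigPolySpan hv) (continuous_of_mem_trigPolySpan hw)
  | smul c _ _ hv0 => exact hv0.const_smul c

theorem hasVanishingMean_mul_expFreq_neg (hv : v ∈ trigPolySpan F) {μ : ℝ} (hμ : μ ∉ F) :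
    HasVanishingMean (v * expFreq (-μ)) := by
  refine hasVanishingMean_of_mem_trigPolySpan
    (mul_mem_trigPolySpan hv (expFreq_mem_trigPolySpan (Set.mem_singleton (-μ)))) ?_
  rintro ⟨ν, hν, _, rfl, h0⟩
  have hνμ : ν = μ := by linarith [show ν + -μ = 0 from h0]
  exact hμ (hνμ ▸ hν)

end TrigPoly

noncomputable def trigPolySubalgebra (E : AddSubmonoid ℝ) : Subalgebra ℂ (ℝ → ℂ) :=
  (trigPolySpan E).toSubalgebra (expFreq_zero ▸ expFreq_mem_trigPolySpan E.zero_mem)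
    fun _ _ hv hw => trigPolySpan_mono (Set.add_subset_iff.2 fun _ hx _ hy => E.add_mem hx hy)
      (mul_mem_trigPolySpan hv hw)

theorem ofReal_polynomial_eval_mem {X : Type*} (S : Subalgebra ℂ (X → ℂ)) {v : X → ℝ}
    (hv : (fun x => (v x : ℂ)) ∈ S) (p : Polynomial ℝ) :
    (fun x => ((p.eval (v x) : ℝ) : ℂ)) ∈ S := by
  have h : Polynomial.aeval (fun x => (v x : ℂ)) p ∈ S.restrictScalars ℝ :=
    Algebra.adjoin_singleton_le (R := ℝ) (S := S.restrictScalars ℝ)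
      ((Subalgebra.mem_restrictScalars ℝ).2 hv) (Polynomial.aeval_mem_adjoin_singleton ℝ _)
  convert (Subalgebra.mem_restrictScalars ℝ).1 h using 1
  ext x
  have := Polynomial.aeval_algHom_apply (Pi.evalAlgHom ℝ (fun _ => ℂ) x) (fun x => (v x : ℂ)) p
  simp only [Pi.evalAlgHom_apply] at this
  rw [← this, ← Complex.coe_algebraMap, Polynomial.aeval_algebraMap_apply_eq_algebraMap_eval]

theorem exists_polynomial_abs_approx (M : ℝ) {ε : ℝ} (hε : 0 < ε) :
    ∃ p : Polynomial ℝ, ∀ x, |x| ≤ M → |(|x|) - p.eval (x ^ 2)| ≤ ε := by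
  obtain ⟨p, hp⟩ := exists_polynomial_near_of_continuousOn 0 (M ^ 2) Real.sqrt
    Real.continuous_sqrt.continuousOn ε hε
  refine ⟨p, fun x hx => ?_⟩
  have hx2 : x ^ 2 ∈ Set.Icc 0 (M ^ 2) :=
    ⟨sq_nonneg x, sq_abs x ▸ pow_le_pow_left₀ (abs_nonneg x) hx 2⟩
  rw [← Real.sqrt_sq_eq_abs x, abs_sub_comm]
  exact (hp _ hx2).le

theorem hasVanishingMean_abs_mul_expFreq_neg {E : AddSubmonoid ℝ} {O : Set ℝ} (hOE : O + O ⊆ E)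
    {v : ℝ → ℝ} (hv : (fun t => (v t : ℂ)) ∈ trigPolySpan O) {μ : ℝ} (hμ : μ ∉ E) :
    HasVanishingMean (fun t => ((|v t| : ℝ) : ℂ) * expFreq (-μ) t) := by
  have hvc : Continuous v := by
    simpa [Function.comp_def] using continuous_re.comp (continuous_of_mem_trigPolySpan hv)
  obtain ⟨M, hM⟩ := exists_norm_le_of_mem_trigPolySpan hv
  have hv2 : (fun t => ((v t ^ 2 : ℝ) : ℂ)) ∈ trigPolySubalgebra E := by
    rw [trigPolySubalgebra, Submodule.mem_toSubalgebra]
    convert trigPolySpan_mono hOE (mul_mem_trigPolySpan hv hv) using 1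
    ext t
    simp [sq]
  refine .of_forall_approx (by fun_prop) fun ε hε => ?_
  obtain ⟨p, hp⟩ := exists_polynomial_abs_approx M hε
  have hW := ofReal_polynomial_eval_mem _ hv2 p
  refine ⟨_, hasVanishingMean_mul_expFreq_neg hW hμ,
    (continuous_of_mem_trigPolySpan hW).mul (continuous_expFreq _), fun t => ?_⟩
  rw [Pi.mul_apply, ← sub_mul, norm_mul, norm_expFreq, mul_one, ← ofReal_sub, norm_real,
    Real.norm_eq_abs]
  exact hp _ (by simpa using hM t)

theorem conj_expFreq (μ t : ℝ) : starRingEnd ℂ (expFreq μ t) = expFreq (-μ) t := by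
  rw [expFreq, expFreq, ← exp_conj]
  simp

theorem smul_expFreq_add_conj_smul_expFreq_neg (c : ℂ) (μ t : ℝ) :
    (c • expFreq μ + starRingEnd ℂ c • expFreq (-μ)) t = ((2 * (c * expFreq μ t).re : ℝ) : ℂ) := by
  rw [← add_conj, map_mul, conj_expFreq]
  rfl

section Parity

variable {ι : Type*} [Fintype ι] (Λ : ι → ℝ)

def evenFrequencies : AddSubmonoid ℝ where
  carrier := {x | ∃ m : ι → ℤ, Even (∑ k, m k) ∧ ∑ k, (m k : ℝ) * Λ k = x}
  zero_mem' := ⟨0, by simp⟩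
  add_mem' := by
    rintro _ _ ⟨m, hm, rfl⟩ ⟨m', hm', rfl⟩
    exact ⟨m + m', by simpa [Finset.sum_add_distrib] using hm.add hm',
      by simp [add_mul, Finset.sum_add_distrib]⟩

def oddFrequencies : Set ℝ :=
  {x | ∃ m : ι → ℤ, Odd (∑ k, m k) ∧ ∑ k, (m k : ℝ) * Λ k = x}

theorem oddFrequencies_add_subset : oddFrequencies Λ + oddFrequencies Λ ⊆ evenFrequencies Λ := by
  rintro _ ⟨_, ⟨m, hm, rfl⟩, _, ⟨m', hm', rfl⟩, rfl⟩
  exact ⟨m + m', by simpa [Finset.sum_add_distrib] using hm.add_odd hm',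
    by simp [add_mul, Finset.sum_add_distrib]⟩

variable {Λ}

theorem neg_mem_oddFrequencies {x : ℝ} (hx : x ∈ oddFrequencies Λ) : -x ∈ oddFrequencies Λ := by
  obtain ⟨m, hm, rfl⟩ := hx
  exact ⟨-m, by simpa using hm.neg, by simp⟩

theorem self_mem_oddFrequencies [DecidableEq ι] (k : ι) : Λ k ∈ oddFrequencies Λ :=
  ⟨Pi.single k 1, by simp, by simp [Pi.single_apply]⟩

theorem notMem_evenFrequencies [DecidableEq ι]
    (hind : ∀ m : ι → ℤ, ∑ k, (m k : ℝ) * Λ k = 0 → m = 0) (k : ι) :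
    Λ k ∉ evenFrequencies Λ := by
  rintro ⟨m, hm, hmk⟩
  have hm1 : m = Pi.single k 1 := sub_eq_zero.1 <| hind _ <| by
    simp [sub_mul, Finset.sum_sub_distrib, hmk, Pi.single_apply]
  simp [hm1] at hm

end Parity

theorem spectrum_abs_avoids_frequencies_general (N : ℕ) (Λ : Fin N → ℝ)
    (hind : ∀ m : Fin N → ℤ, (∑ k, (m k : ℝ) * Λ k) = 0 → m = 0)
    (a : Fin N → ℂ)
    (u : ℝ → ℂ)
    (hu : ∀ t : ℝ, u t = ∑ k, (a k * Complex.exp (Complex.I * (Λ k) * t) +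
        (starRingEnd ℂ) (a k) * Complex.exp (-(Complex.I * (Λ k) * t)))) :
    ∀ k : Fin N,
      Tendsto (fun T : ℝ => (1 / T : ℂ) *
          ∫ t in (0:ℝ)..T,
            ((‖u t‖ : ℝ) : ℂ) * Complex.exp (-(Complex.I * (Λ k) * t)))
        atTop (nhds 0) := by
  intro k
  have hu' : u = ∑ j, (a j • expFreq (Λ j) + starRingEnd ℂ (a j) • expFreq (-Λ j)) := by
    ext t
    simp [hu, expFreq, Finset.sum_apply]
  have hodd : u ∈ trigPolySpan (oddFrequencies Λ) := hu' ▸ Submodule.sum_mem _ fun j _ =>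
    add_mem (Submodule.smul_mem _ _ (expFreq_mem_trigPolySpan (self_mem_oddFrequencies j)))
      (Submodule.smul_mem _ _
        (expFreq_mem_trigPolySpan (neg_mem_oddFrequencies (self_mem_oddFrequencies j))))
  obtain ⟨r, rfl⟩ : ∃ r : ℝ → ℝ, u = fun t => (r t : ℂ) :=
    ⟨fun t => ∑ j, 2 * (a j * expFreq (Λ j) t).re, by
      ext t
      rw [hu', Finset.sum_apply, ofReal_sum]
      exact Finset.sum_congr rfl fun j _ => smul_expFreq_add_conj_smul_expFreq_neg _ _ _⟩
  have h := hasVanishingMean_abs_mul_expFreq_neg (oddFrequencies_add_subset Λ) hodd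
    (notMem_evenFrequencies hind k)
  unfold HasVanishingMean runningMean at h
  simpa [expFreq] using h

/-- If u is a real trigonometric polynomial with ℤ-independent positive
frequencies λ₁,…,λ_N, then no λ_k belongs to the spectrum of |u|. -/
theorem spectrum_abs_avoids_frequencies (N : ℕ) (Λ : Fin N → ℝ)
    (hpos : ∀ k, 0 < Λ k)
    (hind : ∀ m : Fin N → ℤ, (∑ k, (m k : ℝ) * Λ k) = 0 → m = 0)
    (a : Fin N → ℂ)
    (u : ℝ → ℂ)
    (hu : ∀ t : ℝ, u t = ∑ k, (a k * Complex.exp (Complex.I * (Λ k) * t) +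
        (starRingEnd ℂ) (a k) * Complex.exp (-(Complex.I * (Λ k) * t)))) :
    ∀ k : Fin N,
      Tendsto (fun T : ℝ => (1 / T : ℂ) *
          ∫ t in (0:ℝ)..T,
            ((‖u t‖ : ℝ) : ℂ) * Complex.exp (-(Complex.I * (Λ k) * t)))
        atTop (nhds 0) :=
  spectrum_abs_avoids_frequencies_general N Λ hind a u hu
end

section
/- Let S : ℝ → ℂ be a continuous 2π-periodic function with |S| ≤ M whose Fourier coefficients at frequencies ±1 vanish (∫₀^{2π} S(s)e^{±is} ds = 0). Then the solution w of w'' + w = S with w(0) = 0, w'(0) = 0 satisfies: w and w' are uniformly bounded on [0,∞). Moreover ‖w‖_∞ ≤ C‖S‖_∞ for a universal constant C (coming from C₀ = (Σ_{n≠±1} (n²−1)^{−2})^{1/2} and the analogous constant for the derivative). -/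
open Real

/-! The combinations `u± = w' ± i w` solve the first-order equations `u±' = ±i u± + S`, so
`u±(s) = e^{±is} ∫₀ˢ e^{∓it} S(t) dt`. The integrands are `2π`-periodic, and the vanishing of the
Fourier coefficients of `S` at `±1` says exactly that they have mean zero; hence their
antiderivatives are periodic and bounded by `2πM`. Half the sum and half the difference of `u±`
recover `w'` and `i w`, so `C = 2π` works. -/

namespace Function.Periodic

variable {E : Type*} [NormedAddCommGroup E] [NormedSpace ℝ E] {f : ℝ → E} {T : ℝ}

theorem periodic_intervalIntegral_of_integral_eq_zero (hf : Periodic f T)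
    (h_int : ∀ t₁ t₂, IntervalIntegrable f MeasureTheory.volume t₁ t₂)
    (hzero : ∫ x in 0..T, f x = 0) : Periodic (fun s => ∫ x in 0..s, f x) T := fun s => by
  simpa [hzero] using hf.intervalIntegral_add_eq_add 0 s h_int

theorem norm_intervalIntegral_le_of_integral_eq_zero (hf : Periodic f T) (hT : 0 < T)
    (h_int : ∀ t₁ t₂, IntervalIntegrable f MeasureTheory.volume t₁ t₂)
    (hzero : ∫ x in 0..T, f x = 0) {M : ℝ} (hbd : ∀ t, ‖f t‖ ≤ M) (s : ℝ) :
    ‖∫ x in 0..s, f x‖ ≤ T * M := by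
  obtain ⟨y, ⟨hy₀, hyT⟩, hsy⟩ :=
    (hf.periodic_intervalIntegral_of_integral_eq_zero h_int hzero).exists_mem_Ico₀ hT s
  have hM : 0 ≤ M := (norm_nonneg _).trans (hbd 0)
  calc ‖∫ x in 0..s, f x‖ = ‖∫ x in 0..y, f x‖ := congrArg norm hsy
    _ ≤ M * |y - 0| := intervalIntegral.norm_integral_le_of_norm_le_const fun x _ => hbd x
    _ ≤ T * M := by rw [sub_zero, abs_of_nonneg hy₀]; nlinarith

end Function.Periodic

theorem hasDerivAt_cexp_const_mul (c : ℂ) (s : ℝ) :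
    HasDerivAt (fun t : ℝ => Complex.exp (c * t)) (c * Complex.exp (c * s)) s := by
  simpa [mul_comm] using ((hasDerivAt_id s).ofReal_comp.const_mul c).cexp

theorem eq_exp_mul_integral_of_hasDerivAt {u f : ℝ → ℂ} {c : ℂ} (hf : Continuous f)
    (hu : ∀ s, HasDerivAt u (c * u s + f s) s) (hu₀ : u 0 = 0) (s : ℝ) :
    u s = Complex.exp (c * s) * ∫ t in 0..s, Complex.exp (-c * t) * f t := by
  have hg : Continuous fun t : ℝ => Complex.exp (-c * t) * f t := by fun_prop
  have hderiv : ∀ t : ℝ, HasDerivAt (fun t : ℝ => Complex.exp (-c * t) * u t -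
      ∫ x in 0..t, Complex.exp (-c * x) * f x) 0 t := fun t => by
    refine (((hasDerivAt_cexp_const_mul (-c) t).mul (hu t)).sub
      (hg.integral_hasStrictDerivAt 0 t).hasDerivAt).congr_deriv ?_
    ring
  have hconst := is_const_of_deriv_eq_zero (fun t => (hderiv t).differentiableAt)
    (fun t => (hderiv t).deriv) s 0
  simp only [hu₀, mul_zero, intervalIntegral.integral_same, sub_zero, sub_eq_zero] at hconst
  rw [← hconst, ← mul_assoc, ← Complex.exp_add]
  simp

theorem norm_cexp_mul_ofReal_of_re_eq_zero {c : ℂ} (hc : c.re = 0) (t : ℝ) :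
    ‖Complex.exp (c * t)‖ = 1 := by
  simp [Complex.norm_exp, hc]

theorem norm_le_of_hasDerivAt_mul_add_of_re_eq_zero {u f : ℝ → ℂ} {c : ℂ} {T M : ℝ}
    (hc : c.re = 0) (hT : 0 < T) (hcT : Complex.exp (c * T) = 1) (hf : Continuous f)
    (hper : Function.Periodic f T)
    (hbd : ∀ t, ‖f t‖ ≤ M) (hzero : ∫ t in 0..T, Complex.exp (-c * t) * f t = 0)
    (hu : ∀ s, HasDerivAt u (c * u s + f s) s) (hu₀ : u 0 = 0) (s : ℝ) : ‖u s‖ ≤ T * M := by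
  have hexp_per : Function.Periodic (fun t : ℝ => Complex.exp (-c * t)) T := fun t => by
    simp [mul_add, Complex.exp_add, Complex.exp_neg, hcT]
  have hg : Continuous fun t : ℝ => Complex.exp (-c * t) * f t := by fun_prop
  rw [eq_exp_mul_integral_of_hasDerivAt hf hu hu₀ s, norm_mul,
    norm_cexp_mul_ofReal_of_re_eq_zero hc, one_mul]
  refine (hexp_per.mul hper).norm_intervalIntegral_le_of_integral_eq_zero hT
    (fun _ _ => hg.intervalIntegrable _ _) hzero (fun t => ?_) s
  simpa only [Pi.mul_apply, norm_mul, norm_cexp_mul_ofReal_of_re_eq_zero (c := -c) (by simp [hc]),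
    one_mul] using hbd t

theorem hasDerivAt_add_mul_of_sq_eq_neg_one {w w' S : ℝ → ℂ} {c : ℂ} (hc : c ^ 2 = -1)
    (hw : ∀ s, HasDerivAt w (w' s) s) (hw' : ∀ s, HasDerivAt w' (S s - w s) s) (s : ℝ) :
    HasDerivAt (fun t => w' t + c * w t) (c * (w' s + c * w s) + S s) s :=
  ((hw' s).add ((hw s).const_mul c)).congr_deriv (by linear_combination (-w s) * hc)

theorem norm_le_of_norm_add_I_mul_le {a b : ℂ} {K : ℝ} (hplus : ‖a + Complex.I * b‖ ≤ K)
    (hminus : ‖a + -Complex.I * b‖ ≤ K) : ‖b‖ ≤ K ∧ ‖a‖ ≤ K := by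
  have hb : 2 * Complex.I * b = (a + Complex.I * b) - (a + -Complex.I * b) := by ring
  have ha : 2 * a = (a + Complex.I * b) + (a + -Complex.I * b) := by ring
  have hb' := congrArg norm hb
  have ha' := congrArg norm ha
  simp only [norm_mul, Complex.norm_I, Complex.norm_ofNat, mul_one] at hb' ha'
  constructor
  · linarith [norm_sub_le (a + Complex.I * b) (a + -Complex.I * b)]
  · linarith [norm_add_le (a + Complex.I * b) (a + -Complex.I * b)]

/-- If S is continuous, 2π-periodic, bounded by M, with vanishing Fourier
coefficients at frequencies ±1, then the solution of w'' + w = S with zero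
initial data is uniformly bounded, together with its derivative, by C·M for a
universal constant C. -/
theorem nonresonant_forced_oscillator_bounded :
    ∃ C > (0:ℝ), ∀ (M : ℝ), 0 < M → ∀ (S w w' : ℝ → ℂ),
      Continuous S → Function.Periodic S (2 * π) →
      (∀ s, ‖S s‖ ≤ M) →
      (∫ s in (0:ℝ)..(2 * π), S s * Complex.exp (Complex.I * s)) = 0 →
      (∫ s in (0:ℝ)..(2 * π), S s * Complex.exp (-(Complex.I * s))) = 0 →
      (∀ s, HasDerivAt w (w' s) s) →
      (∀ s, HasDerivAt w' (S s - w s) s) →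
      w 0 = 0 → w' 0 = 0 →
      ∀ s : ℝ, 0 ≤ s → ‖w s‖ ≤ C * M ∧ ‖w' s‖ ≤ C * M := by
  refine ⟨2 * π, two_pi_pos, fun M _ S w w' hS hSper hSbd hc₁ hc₂ hw hw' hw₀ hw'₀ s _ => ?_⟩
  have hbound : ∀ c : ℂ, c ^ 2 = -1 → c.re = 0 → Complex.exp (c * (2 * π : ℝ)) = 1 →
      ∫ t in 0..2 * π, Complex.exp (-c * t) * S t = 0 → ‖w' s + c * w s‖ ≤ 2 * π * M :=
    fun c hc hre hper hzero => norm_le_of_hasDerivAt_mul_add_of_re_eq_zero hre two_pi_pos hper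
      hS hSper hSbd hzero (hasDerivAt_add_mul_of_sq_eq_neg_one hc hw hw') (by simp [hw₀, hw'₀]) s
  refine norm_le_of_norm_add_I_mul_le (hbound _ Complex.I_sq Complex.I_re ?_ ?_)
    (hbound _ (by simp) (by simp) ?_ ?_)
  · simpa [mul_comm] using Complex.exp_two_pi_mul_I
  · simpa only [neg_mul, mul_comm (Complex.exp _)] using hc₂
  · simpa [Complex.exp_neg, mul_comm] using Complex.exp_two_pi_mul_I
  · simpa only [neg_mul, neg_neg, mul_comm (Complex.exp _)] using hc₁
end
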